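/- Let X be a solution of the inviscid dyadic model on [0,T) with energy E, and let 0 ≤ s < t < T. If E(t) > E(s), then X(s) ∉ H_+, i.e. X_n(s) < 0 for infinitely many n. In plain words: energy may increase only outside H_+. -/

import Mathlib

open MeasureTheory Set Filter Topology

/-- `X` is a solution of the inviscid dyadic model on the time set `D`
(typically `Set.Ico 0 T` or `Set.Ici 0`), with coefficients `k` bounded by `C * 2 ^ n`.
The components of the solution are `X 1, X 2, ...`; by convention `X 0 ≡ 0` and `k 0 = 0`. -/
def IsDyadicSolutionOn (C : ℝ) (k : ℕ → ℝ) (X : ℕ → ℝ → ℝ) (D : Set ℝ) : Prop :=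
  0 < C ∧ k 0 = 0 ∧
  (∀ n : ℕ, 1 ≤ n → 0 ≤ k n ∧ k n ≤ C * 2 ^ n) ∧
  (∀ t : ℝ, X 0 t = 0) ∧
  (∀ n : ℕ, 1 ≤ n → ∀ t ∈ D, HasDerivWithinAt (X n)
      (k (n - 1) * X (n - 1) t ^ 2 - k n * X n t * X (n + 1) t) D t) ∧
  (∀ t ∈ D, Summable fun j : ℕ => X (j + 1) t ^ 2)

/-- The energy `E(t) = ∑_{j ≥ 1} X_j(t)^2`. -/
noncomputable def energy (X : ℕ → ℝ → ℝ) (t : ℝ) : ℝ :=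
  ∑' j : ℕ, X (j + 1) t ^ 2

/-- The function `a(t) = sup_{n ≥ 1} (- k_n X_{n+1}(t))`. -/
noncomputable def classKfun (k : ℕ → ℝ) (X : ℕ → ℝ → ℝ) (t : ℝ) : ℝ :=
  ⨆ n : ℕ, -(k (n + 1) * X (n + 2) t)

/-- A solution is of class `K` if `a(t) = sup_{n ≥ 1} (- k_n X_{n+1}(t))` is locally
integrable on `[0,∞)`. -/
def IsClassK (k : ℕ → ℝ) (X : ℕ → ℝ → ℝ) : Prop :=
  LocallyIntegrableOn (classKfun k X) (Set.Ici 0)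

/-! Each equation is linear in its own unknown,
`X_n' = k_{n-1} X_{n-1}^2 - (k_n X_{n+1}) X_n`, with a nonnegative source term, so a component
that is nonnegative at time `s` stays nonnegative on `[s, t]`.
Since the energy flux telescopes, the truncated energy `∑_{j ≤ N} X_j^2` has derivative
`-2 k_N X_N^2 X_{N+1}`; once `X_{N+1}(s) ≥ 0` it is nonincreasing on `[s, t]`, and letting `N → ∞`
gives `E(t) ≤ E(s)`. -/

theorem nonneg_of_hasDerivAt_ge_neg_mul {f f' b : ℝ → ℝ} {s t : ℝ}
    (hf : ContinuousOn f (Icc s t)) (hb : ContinuousOn b (Icc s t))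
    (hf' : ∀ r ∈ Ioo s t, HasDerivAt f (f' r) r)
    (hineq : ∀ r ∈ Ioo s t, -(b r * f r) ≤ f' r) (hfs : 0 ≤ f s) :
    ∀ r ∈ Icc s t, 0 ≤ f r := by
  intro r hr
  have hst : s ≤ t := hr.1.trans hr.2
  set G : ℝ → ℝ := fun u => ∫ v in s..u, b v
  have hG : ContinuousOn G (Icc s t) := by
    rw [← uIcc_of_le hst] at hb ⊢
    exact intervalIntegral.continuousOn_primitive_interval (hb.integrableOn_compact isCompact_uIcc)
  have hG' : ∀ u ∈ Ioo s t, HasDerivAt G (b u) u := fun u hu =>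
    intervalIntegral.integral_hasDerivAt_right
      ((hb.mono (Icc_subset_Icc_right hu.2.le)).intervalIntegrable_of_Icc hu.1.le)
      ((hb.mono Ioo_subset_Icc_self).stronglyMeasurableAtFilter isOpen_Ioo u hu)
      (hb.continuousAt (Icc_mem_nhds hu.1 hu.2))
  set y : ℝ → ℝ := fun u => f u * Real.exp (G u)
  have hy_mono : MonotoneOn y (Icc s t) := by
    refine monotoneOn_of_hasDerivWithinAt_nonneg (convex_Icc s t)
      (hf.mul (Real.continuous_exp.comp_continuousOn hG))
      (f' := fun u => (f' u + b u * f u) * Real.exp (G u)) ?_ ?_ <;>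
      rw [interior_Icc] <;> intro u hu
    · exact (((hf' u hu).mul (hG' u hu).exp).congr_deriv (by ring)).hasDerivWithinAt
    · exact mul_nonneg (by linarith [hineq u hu]) (Real.exp_nonneg _)
  have hyr : 0 ≤ y r := by
    have hys : y s = f s := by simp [y, G]
    linarith [hy_mono (left_mem_Icc.2 hst) hr hr.1]
  exact nonneg_of_mul_nonneg_left hyr (Real.exp_pos _)

namespace IsDyadicSolutionOn

variable {C : ℝ} {k : ℕ → ℝ} {X : ℕ → ℝ → ℝ} {D : Set ℝ}

theorem coeff_nonneg (hX : IsDyadicSolutionOn C k X D) (n : ℕ) : 0 ≤ k n := by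
  rcases Nat.eq_zero_or_pos n with rfl | hn
  · exact hX.2.1.ge
  · exact (hX.2.2.1 n hn).1

theorem continuousOn (hX : IsDyadicSolutionOn C k X D) {n : ℕ} (hn : 1 ≤ n) :
    ContinuousOn (X n) D :=
  fun r hr => (hX.2.2.2.2.1 n hn r hr).continuousWithinAt

theorem hasDerivAt (hX : IsDyadicSolutionOn C k X D) {n : ℕ} (hn : 1 ≤ n) {r : ℝ}
    (hr : r ∈ interior D) :
    HasDerivAt (X n) (k (n - 1) * X (n - 1) r ^ 2 - k n * X n r * X (n + 1) r) r :=
  (hX.2.2.2.2.1 n hn r (interior_subset hr)).hasDerivAt (mem_interior_iff_mem_nhds.1 hr)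

theorem nonneg_on_Icc_of_nonneg_left {s t : ℝ} (hX : IsDyadicSolutionOn C k X D)
    (hD : Icc s t ⊆ D) {n : ℕ} (hn : 1 ≤ n) (hs : 0 ≤ X n s) : ∀ r ∈ Icc s t, 0 ≤ X n r := by
  have hint : Ioo s t ⊆ interior D := interior_Icc (a := s) (b := t) ▸ interior_mono hD
  refine nonneg_of_hasDerivAt_ge_neg_mul (b := fun r => k n * X (n + 1) r)
    ((hX.continuousOn hn).mono hD)
    (continuousOn_const.mul ((hX.continuousOn (n.le_succ.trans' hn)).mono hD))
    (fun r hr => hX.hasDerivAt hn (hint hr)) (fun r _ => ?_) hs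
  linarith [mul_nonneg (hX.coeff_nonneg (n - 1)) (sq_nonneg (X (n - 1) r))]

theorem hasDerivAt_sum_range_sq (hX : IsDyadicSolutionOn C k X D) (N : ℕ) {r : ℝ}
    (hr : r ∈ interior D) :
    HasDerivAt (fun u => ∑ j ∈ Finset.range N, X (j + 1) u ^ 2)
      (-2 * (k N * X N r ^ 2 * X (N + 1) r)) r := by
  set flux : ℕ → ℝ := fun j => 2 * (k j * X j r ^ 2 * X (j + 1) r)
  have hterm : ∀ j ∈ Finset.range N,
      HasDerivAt (fun u => X (j + 1) u ^ 2) (flux j - flux (j + 1)) r := fun j _ =>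
    ((hX.hasDerivAt (Nat.le_add_left 1 j) hr).pow 2).congr_deriv
      (by simp only [flux, Nat.add_sub_cancel]; ring)
  refine (HasDerivAt.fun_sum hterm).congr_deriv ?_
  rw [Finset.sum_range_sub' flux]
  simp only [flux, hX.2.1, hX.2.2.2.1 r]
  ring

theorem sum_range_sq_antitoneOn {s t : ℝ} (hX : IsDyadicSolutionOn C k X D)
    (hD : Icc s t ⊆ D) {N : ℕ} (hN : 0 ≤ X (N + 1) s) :
    AntitoneOn (fun u => ∑ j ∈ Finset.range N, X (j + 1) u ^ 2) (Icc s t) := by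
  have hint : interior (Icc s t) ⊆ interior D := interior_mono hD
  refine antitoneOn_of_hasDerivWithinAt_nonpos (convex_Icc s t)
    (continuousOn_finsetSum _ fun j _ => ((hX.continuousOn j.succ_pos).mono hD).pow 2)
    (fun r hr => (hX.hasDerivAt_sum_range_sq N (hint hr)).hasDerivWithinAt) fun r hr => ?_
  have hXN : 0 ≤ X (N + 1) r :=
    hX.nonneg_on_Icc_of_nonneg_left hD N.succ_pos hN r (interior_subset hr)
  have := mul_nonneg (mul_nonneg (hX.coeff_nonneg N) (sq_nonneg (X N r))) hXN
  linarith

theorem energy_le_of_eventually_nonneg {s t : ℝ} (hX : IsDyadicSolutionOn C k X D)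
    (hst : s ≤ t) (hD : Icc s t ⊆ D) (hpos : ∀ᶠ n in atTop, 0 ≤ X n s) :
    energy X t ≤ energy X s := by
  have hsum : ∀ r ∈ Icc s t, Summable fun j => X (j + 1) r ^ 2 :=
    fun r hr => hX.2.2.2.2.2 r (hD hr)
  refine le_of_tendsto (hsum t (right_mem_Icc.2 hst)).tendsto_sum_tsum_nat ?_
  filter_upwards [(tendsto_add_atTop_nat 1).eventually hpos] with N hN
  calc ∑ j ∈ Finset.range N, X (j + 1) t ^ 2
      ≤ ∑ j ∈ Finset.range N, X (j + 1) s ^ 2 :=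
        hX.sum_range_sq_antitoneOn hD hN (left_mem_Icc.2 hst) (right_mem_Icc.2 hst) hst
    _ ≤ energy X s :=
        (hsum s (left_mem_Icc.2 hst)).sum_le_tsum _ fun j _ => sq_nonneg _

end IsDyadicSolutionOn

/-- energy may increase only outside `H₊`: if `E(t) > E(s)` then
`X_n(s) < 0` for infinitely many `n`. -/
theorem energy_increase_only_outside_Hplus
    (C : ℝ) (k : ℕ → ℝ) (X : ℕ → ℝ → ℝ) (T : ℝ)
    (hX : IsDyadicSolutionOn C k X (Set.Ico 0 T))
    (s t : ℝ) (hs : 0 ≤ s) (hst : s < t) (ht : t < T)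
    (hE : energy X s < energy X t) :
    ¬ {n : ℕ | X n s < 0}.Finite := by
  intro hfin
  have hpos : ∀ᶠ n in atTop, 0 ≤ X n s :=
    Nat.cofinite_eq_atTop ▸ hfin.eventually_cofinite_notMem.mono fun _ hn => not_lt.1 hn
  have hD : Icc s t ⊆ Ico 0 T := Icc_subset_Ico hs ht
  exact (hX.energy_le_of_eventually_nonneg hst.le hD hpos).not_gt hE
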